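/- Let M and N be matroids on finite ground sets with E(M) ∩ E(N) = {p}, where p is neither a loop nor a coloop of M or of N. Let P be a matroid on E(M) ∪ E(N) whose circuits are exactly the circuits of M, the circuits of N, and the sets (C ∪ D) ∖ {p} for C a circuit of M containing p and D a circuit of N containing p; let Q = P ∖ p (the 2-sum of M and N). Suppose M has a cycle system (C_1, …, C_g) and N has a cycle system (D_1, …, D_f) such that p ∈ C_1 ∩ D_1 and p lies in no C_j with j ≠ 1. For i = 1, …, f define D̃_i = D_i if p ∉ D_i and D̃_i = (C_1 ∪ D_i) ∖ {p} if p ∈ D_i. Then the family (C_2, …, C_g, D̃_1, …, D̃_f) is a cycle system for Q. -/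

import Mathlib

open Set Matroid

/-- The unique union of the subfamily of `A` indexed by `σ`: the set of elements that lie in
`A i` for exactly one index `i ∈ σ`. -/
def uniqueUnion {α ι : Type*} (A : ι → Set α) (σ : Finset ι) : Set α :=
  {e | ∃! i, i ∈ σ ∧ e ∈ A i}

namespace Matroid

variable {α : Type*}

/-- A circuit of a matroid: a minimal dependent set. -/
def Circuit (M : Matroid α) (C : Set α) : Prop := Minimal M.Dep C

/-- A cycle of a matroid: a union of circuits. -/
def IsCycle (M : Matroid α) (K : Set α) : Prop :=
  ∃ S : Set (Set α), (∀ C ∈ S, M.Circuit C) ∧ K = ⋃₀ S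

/-- The rank of a matroid: the cardinality of a base. -/
noncomputable def rkNat (M : Matroid α) : ℕ := M.exists_isBase.choose.ncard

/-- A cycle system for `M`: a family of cycles, indexed by a finite type whose cardinality is
the corank `|E| - rank` of `M`, such that the unique union of every nonempty subfamily is
dependent. -/
def IsCycleSystem (M : Matroid α) {ι : Type*} [Fintype ι] (C : ι → Set α) : Prop :=
  Fintype.card ι = M.E.ncard - M.rkNat ∧ (∀ i, M.IsCycle (C i)) ∧
    ∀ σ : Finset ι, σ.Nonempty → M.Dep (uniqueUnion C σ)

/-- Deletion of a set of elements from a matroid. -/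
def deleteSet (M : Matroid α) (D : Set α) : Matroid α := M ↾ (M.E \ D)

/-- Contraction of a set of elements in a matroid, defined via duality. -/
def contractSet (M : Matroid α) (X : Set α) : Matroid α := (M✶.deleteSet X)✶

end Matroid

/-- A coparking function with respect to a family `C` of sets: a vector `a` of naturals such
that every nonempty index set `σ` contains some `i` with `a i < |C i ∩ uniqueUnion C σ|`. -/
def IsCoparking {α ι : Type*} [Fintype ι] (C : ι → Set α) (a : ι → ℕ) : Prop :=
  ∀ σ : Finset ι, σ.Nonempty → ∃ i ∈ σ, a i < (C i ∩ uniqueUnion C σ).ncard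

/- ### Auxiliary lemmas -/

lemma mem_uniqueUnion {α ι : Type*} {A : ι → Set α} {σ : Finset ι} {e : α} :
    e ∈ uniqueUnion A σ ↔ ∃! i, i ∈ σ ∧ e ∈ A i := Iff.rfl

namespace Matroid

variable {α : Type*} {M : Matroid α} {X C K : Set α}

lemma Circuit.dep' (h : M.Circuit C) : M.Dep C := h.prop

lemma Circuit.subset_ground' (h : M.Circuit C) : C ⊆ M.E := h.prop.subset_ground

lemma exists_circuit_subset' (hfin : X.Finite) (hX : M.Dep X) :
    ∃ C, M.Circuit C ∧ C ⊆ X := by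
  obtain ⟨n, hn⟩ : ∃ n, X.ncard = n := ⟨_, rfl⟩
  induction n using Nat.strong_induction_on generalizing X with
  | _ n ih =>
  by_cases h : Minimal M.Dep X
  · exact ⟨X, h, subset_rfl⟩
  · rw [Minimal] at h
    push_neg at h
    obtain ⟨Y, hY, hYX, hXY⟩ := h hX
    have hss : Y ⊂ X := lt_of_le_not_ge hYX hXY
    obtain ⟨C, hC, hCY⟩ :=
      ih Y.ncard (hn ▸ Set.ncard_lt_ncard hss hfin) (hfin.subset hYX) hY rfl
    exact ⟨C, hC, hCY.trans hYX⟩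

lemma IsCycle.subset_ground' (h : M.IsCycle K) : K ⊆ M.E := by
  obtain ⟨S, hS, rfl⟩ := h
  exact sUnion_subset fun Ct hCt => (hS Ct hCt).subset_ground'

end Matroid

open scoped Classical in
/-- cycle systems of `M` and `N` combine to a cycle system of the 2-sum
`Q = P ∖ p`, where `P` is the parallel connection of `M` and `N` along `p`. -/
theorem statement_12 {α : Type*} {g f : ℕ} (M N P : Matroid α) (p : α)
    (hME : M.E.Finite) (hNE : N.E.Finite)
    (hMN : M.E ∩ N.E = {p})
    (hMloop : ¬ M.Dep {p}) (hNloop : ¬ N.Dep {p})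
    (hMcoloop : ∃ X, M.Circuit X ∧ p ∈ X) (hNcoloop : ∃ X, N.Circuit X ∧ p ∈ X)
    (hPE : P.E = M.E ∪ N.E)
    (hPcirc : ∀ X, P.Circuit X ↔ (M.Circuit X ∨ N.Circuit X ∨
      ∃ Y Z, M.Circuit Y ∧ N.Circuit Z ∧ p ∈ Y ∧ p ∈ Z ∧ X = (Y ∪ Z) \ {p}))
    (C : Fin (g + 1) → Set α) (D : Fin (f + 1) → Set α)
    (hCS : M.IsCycleSystem C) (hDS : N.IsCycleSystem D)
    (hpC : p ∈ C 0) (hpD : p ∈ D 0)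
    (hponce : ∀ j : Fin (g + 1), j ≠ 0 → p ∉ C j) :
    (P.deleteSet {p}).IsCycleSystem
      (Sum.elim (fun j : {j : Fin (g + 1) // j ≠ 0} => C j.1)
        (fun i : Fin (f + 1) => if p ∈ D i then (C 0 ∪ D i) \ {p} else D i)) := by
  set A : ({j : Fin (g + 1) // j ≠ 0} ⊕ Fin (f + 1)) → Set α :=
    Sum.elim (fun j : {j : Fin (g + 1) // j ≠ 0} => C j.1)
      (fun i : Fin (f + 1) => if p ∈ D i then (C 0 ∪ D i) \ {p} else D i) with hA
  obtain ⟨hCcard, hCcyc, hCdep⟩ := hCS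
  obtain ⟨hDcard, hDcyc, hDdep⟩ := hDS
  have hpMN : p ∈ M.E ∩ N.E := by rw [hMN]; exact rfl
  have hpM : p ∈ M.E := hpMN.1
  have hpN : p ∈ N.E := hpMN.2
  have hPfin : P.E.Finite := by rw [hPE]; exact hME.union hNE
  have hMNonly : ∀ e, e ∈ M.E → e ∈ N.E → e = p := by
    intro e h1 h2
    have he : e ∈ M.E ∩ N.E := ⟨h1, h2⟩
    rw [hMN] at he
    exact he
  have hCM : ∀ j, C j ⊆ M.E := fun j => (hCcyc j).subset_ground'
  have hDN : ∀ i, D i ⊆ N.E := fun i => (hDcyc i).subset_ground'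
  have hPc1 : ∀ Y, M.Circuit Y → P.Circuit Y := fun Y h => (hPcirc Y).2 (Or.inl h)
  have hPc2 : ∀ Z, N.Circuit Z → P.Circuit Z := fun Z h => (hPcirc Z).2 (Or.inr (Or.inl h))
  have hPc3 : ∀ Y Z, M.Circuit Y → N.Circuit Z → p ∈ Y → p ∈ Z →
      P.Circuit ((Y ∪ Z) \ {p}) := fun Y Z hY hZ h1 h2 =>
    (hPcirc _).2 (Or.inr (Or.inr ⟨Y, Z, hY, hZ, h1, h2, rfl⟩))
  set Q := P.deleteSet {p} with hQ
  have hQE : Q.E = P.E \ {p} := rfl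
  have hQdep : ∀ X, X ⊆ P.E → p ∉ X → (∃ W, P.Circuit W ∧ W ⊆ X) → Q.Dep X := by
    rintro X hXE hpX ⟨W, hW, hWX⟩
    rw [hQ, Matroid.deleteSet, restrict_dep_iff]
    exact ⟨fun hind => (hW.dep').1 (hind.subset hWX), subset_diff_singleton hXE hpX⟩
  have hQcirc : ∀ W, P.Circuit W → p ∉ W → Q.Circuit W := by
    intro W hW hpW
    constructor
    · exact hQdep W hW.subset_ground' hpW ⟨W, hW, subset_rfl⟩
    · intro Y hY hYW
      have hYP : P.Dep Y := by
        rw [hQ, Matroid.deleteSet, restrict_dep_iff] at hY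
        exact ⟨hY.1, hY.2.trans diff_subset⟩
      exact hW.2 hYP hYW
  -- bases
  have hindp : M.Indep {p} :=
    indep_of_not_dep hMloop (singleton_subset_iff.2 hpM)
  obtain ⟨B1, hB1, hpB1'⟩ := hindp.exists_isBase_superset
  have hpB1 : p ∈ B1 := hpB1' rfl
  have hB1M := hB1.subset_ground
  have hB1fin : B1.Finite := hME.subset hB1M
  obtain ⟨Z0, hZ0, hpZ0⟩ := hNcoloop
  have hZ0mP : N.Indep (Z0 \ {p}) := by
    refine indep_of_not_dep (fun hdep => ?_) (diff_subset.trans hZ0.subset_ground')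
    exact (hZ0.2 hdep diff_subset hpZ0).2 rfl
  obtain ⟨B2, hB2, hZ0B2⟩ := hZ0mP.exists_isBase_superset
  have hB2N := hB2.subset_ground
  have hB2fin : B2.Finite := hNE.subset hB2N
  have hpB2 : p ∉ B2 := by
    intro hp
    have hsub : Z0 ⊆ B2 := by
      intro x hx
      by_cases hxp : x = p
      · exact hxp ▸ hp
      · exact hZ0B2 ⟨hx, hxp⟩
    exact (hZ0.dep').1 (hB2.indep.subset hsub)
  have hdepB2p : N.Dep (insert p B2) := hB2.insert_dep ⟨hpN, hpB2⟩
  obtain ⟨Z1, hZ1, hZ1sub⟩ :=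
    Matroid.exists_circuit_subset' ((hB2fin.insert p)) hdepB2p
  have hpZ1 : p ∈ Z1 := by
    by_contra hp
    have hsub : Z1 ⊆ B2 := by
      intro x hx
      rcases hZ1sub hx with h | h
      · exact absurd (h ▸ hx) hp
      · exact h
    exact (hZ1.dep').1 (hB2.indep.subset hsub)
  set B : Set α := (B1 \ {p}) ∪ B2 with hBdef
  have hBMEsub : B ∩ M.E ⊆ B1 \ {p} := by
    rintro x ⟨hxB, hxM⟩
    rcases hxB with h | h
    · exact h
    · exact absurd ((hMNonly x hxM (hB2N h)) ▸ h) hpB2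
  have hBNEsub : B ∩ N.E ⊆ B2 := by
    rintro x ⟨hxB, hxN⟩
    rcases hxB with ⟨h, hxp⟩ | h
    · exact absurd (hMNonly x (hB1M h) hxN) hxp
    · exact h
  have hBPE : B ⊆ P.E \ {p} := by
    rintro x hx
    rcases hx with ⟨h, hxp⟩ | h
    · exact ⟨hPE ▸ Or.inl (hB1M h), hxp⟩
    · exact ⟨hPE ▸ Or.inr (hB2N h), fun hxp => hpB2 (hxp ▸ h)⟩
  have hBfin : B.Finite := hB1fin.diff.union hB2fin
  have hBindP : P.Indep B := by
    by_contra hni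
    have hdep : P.Dep B := ⟨hni, hBPE.trans diff_subset⟩
    obtain ⟨W, hW, hWB⟩ := Matroid.exists_circuit_subset' hBfin hdep
    rcases (hPcirc W).1 hW with hWM | hWN | ⟨Y, Z, hY, hZ, hpY, hpZ, rfl⟩
    · exact (hWM.dep').1 (hB1.indep.subset
        (((subset_inter hWB hWM.subset_ground').trans hBMEsub).trans diff_subset))
    · exact (hWN.dep').1 (hB2.indep.subset
        ((subset_inter hWB hWN.subset_ground').trans hBNEsub))
    · have hYB1 : Y ⊆ B1 := by
        intro x hx
        by_cases hxp : x = p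
        · exact hxp ▸ hpB1
        · have hxB : x ∈ B := hWB ⟨Or.inl hx, hxp⟩
          exact ((hBMEsub ⟨hxB, hY.subset_ground' hx⟩).1)
      exact (hY.dep').1 (hB1.indep.subset hYB1)
  have hQindB : Q.Indep B := by
    rw [hQ, Matroid.deleteSet, restrict_indep_iff]
    exact ⟨hBindP, hBPE⟩
  have hQbase : Q.IsBase B := by
    refine hQindB.isBase_of_forall_insert ?_
    rintro e ⟨heE, heB⟩ hei
    have heP : e ∈ P.E := (hQE ▸ heE).1
    have hep : e ≠ p := (hQE ▸ heE).2
    have hPind : P.Indep (insert e B) := by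
      rw [hQ, Matroid.deleteSet, restrict_indep_iff] at hei
      exact hei.1
    have hWex : ∃ W, P.Circuit W ∧ W ⊆ insert e B := by
      rcases (hPE ▸ heP : e ∈ M.E ∪ N.E) with heM | heN
      · have heB1 : e ∉ B1 := fun h => heB (Or.inl ⟨h, hep⟩)
        have hdep1 : M.Dep (insert e B1) := hB1.insert_dep ⟨heM, heB1⟩
        obtain ⟨Y, hY, hYsub⟩ := Matroid.exists_circuit_subset' (hB1fin.insert e) hdep1
        by_cases hpY : p ∈ Y
        · refine ⟨(Y ∪ Z1) \ {p}, hPc3 Y Z1 hY hZ1 hpY hpZ1, ?_⟩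
          rintro x ⟨hx, hxp⟩
          rcases hx with hx | hx
          · rcases hYsub hx with h | h
            · exact h ▸ mem_insert _ _
            · exact Or.inr (Or.inl ⟨h, hxp⟩)
          · rcases hZ1sub hx with h | h
            · exact absurd h hxp
            · exact Or.inr (Or.inr h)
        · refine ⟨Y, hPc1 Y hY, ?_⟩
          intro x hx
          rcases hYsub hx with h | h
          · exact h ▸ mem_insert _ _
          · exact Or.inr (Or.inl ⟨h, fun hxp => hpY (hxp ▸ hx)⟩)
      · have heB2 : e ∉ B2 := fun h => heB (Or.inr h)
        have hdep2 : N.Dep (insert e B2) := hB2.insert_dep ⟨heN, heB2⟩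
        obtain ⟨Z, hZ, hZsub⟩ := Matroid.exists_circuit_subset' (hB2fin.insert e) hdep2
        refine ⟨Z, hPc2 Z hZ, ?_⟩
        intro x hx
        rcases hZsub hx with h | h
        · exact h ▸ mem_insert _ _
        · exact Or.inr (Or.inr h)
    obtain ⟨W, hW, hWsub⟩ := hWex
    exact (hW.dep').1 (hPind.subset hWsub)
  -- rank facts
  have hrkQ : Q.rkNat = B.ncard :=
    (Q.exists_isBase.choose_spec).ncard_eq_ncard_of_isBase hQbase
  have hrkM : M.rkNat = B1.ncard :=
    (M.exists_isBase.choose_spec).ncard_eq_ncard_of_isBase hB1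
  have hrkN : N.rkNat = B2.ncard :=
    (N.exists_isBase.choose_spec).ncard_eq_ncard_of_isBase hB2
  have hBdisj : Disjoint (B1 \ {p}) B2 := by
    rw [Set.disjoint_left]
    rintro x ⟨hx1, hxp⟩ hx2
    exact hxp (hMNonly x (hB1M hx1) (hB2N hx2))
  have hBcard : B.ncard = (B1.ncard - 1) + B2.ncard := by
    rw [hBdef, Set.ncard_union_eq hBdisj hB1fin.diff hB2fin,
      Set.ncard_diff_singleton_of_mem hpB1]
  have hB1pos : 1 ≤ B1.ncard := (Set.ncard_pos hB1fin).2 ⟨p, hpB1⟩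
  have hMEeq : M.E.ncard = M.rkNat + (g + 1) := by
    have h1 := hCcard
    rw [Fintype.card_fin] at h1
    have h2 : M.rkNat ≤ M.E.ncard := hrkM ▸ Set.ncard_le_ncard hB1M hME
    omega
  have hNEeq : N.E.ncard = N.rkNat + (f + 1) := by
    have h1 := hDcard
    rw [Fintype.card_fin] at h1
    have h2 : N.rkNat ≤ N.E.ncard := hrkN ▸ Set.ncard_le_ncard hB2N hNE
    omega
  have hUcard : (M.E ∪ N.E).ncard + 1 = M.E.ncard + N.E.ncard := by
    have h := Set.ncard_inter_add_ncard_union M.E N.E hME hNE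
    rw [hMN, Set.ncard_singleton] at h
    omega
  have hQEcard : Q.E.ncard + 1 = (M.E ∪ N.E).ncard := by
    have hQE2 : Q.E = (M.E ∪ N.E) \ {p} := by rw [hQE, hPE]
    rw [hQE2, Set.ncard_diff_singleton_of_mem (show p ∈ M.E ∪ N.E from Or.inl hpM)]
    have hpos : 1 ≤ (M.E ∪ N.E).ncard :=
      (Set.ncard_pos (hME.union hNE)).2 ⟨p, Or.inl hpM⟩
    omega
  -- membership lemmas for A
  have hAinl : ∀ j, A (Sum.inl j) = C j.1 := fun j => rfl
  have hAinr : ∀ i, A (Sum.inr i) = if p ∈ D i then (C 0 ∪ D i) \ {p} else D i :=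
    fun i => rfl
  have hpA : ∀ i, p ∉ A i := by
    rintro (j | i) hp
    · exact hponce j.1 j.2 hp
    · rw [hAinr] at hp
      by_cases hpDi : p ∈ D i
      · rw [if_pos hpDi] at hp
        exact hp.2 rfl
      · rw [if_neg hpDi] at hp
        exact hpDi hp
  have hAsub : ∀ i, A i ⊆ P.E \ {p} := by
    rintro (j | i) x hx
    · exact ⟨hPE ▸ Or.inl (hCM j.1 hx), fun hxp => hpA (Sum.inl j) (hxp ▸ hx)⟩
    · refine ⟨?_, fun hxp => hpA (Sum.inr i) (hxp ▸ hx)⟩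
      rw [hAinr] at hx
      by_cases hpDi : p ∈ D i
      · rw [if_pos hpDi] at hx
        rcases hx.1 with h | h
        · exact hPE ▸ Or.inl (hCM 0 h)
        · exact hPE ▸ Or.inr (hDN i h)
      · rw [if_neg hpDi] at hx
        exact hPE ▸ Or.inr (hDN i hx)
  have hmemM : ∀ e, e ∈ M.E → e ≠ p →
      ∀ i, e ∈ A (Sum.inr i) ↔ (p ∈ D i ∧ e ∈ C 0) := by
    intro e heM hep i
    have heD : e ∉ D i := fun h => hep (hMNonly e heM (hDN i h))
    rw [hAinr]
    by_cases hpDi : p ∈ D i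
    · rw [if_pos hpDi]
      constructor
      · rintro ⟨h | h, -⟩
        · exact ⟨hpDi, h⟩
        · exact absurd h heD
      · rintro ⟨-, h⟩
        exact ⟨Or.inl h, hep⟩
    · rw [if_neg hpDi]
      exact ⟨fun h => absurd h heD, fun h => absurd h.1 hpDi⟩
  have hmemN : ∀ e, e ∈ N.E → e ≠ p →
      (∀ j, e ∉ A (Sum.inl j)) ∧ (∀ i, e ∈ A (Sum.inr i) ↔ e ∈ D i) := by
    intro e heN hep
    have heM : ∀ j : Fin (g+1), e ∉ C j := fun j h => hep (hMNonly e (hCM j h) heN)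
    constructor
    · intro j h
      exact heM j.1 h
    · intro i
      rw [hAinr]
      by_cases hpDi : p ∈ D i
      · rw [if_pos hpDi]
        constructor
        · rintro ⟨h | h, -⟩
          · exact absurd h (heM 0)
          · exact h
        · intro h
          exact ⟨Or.inr h, hep⟩
      · rw [if_neg hpDi]
  -- the three parts
  refine ⟨?_, ?_, ?_⟩
  · -- cardinality
    rw [Fintype.card_sum, Fintype.card_fin]
    have hsub : Fintype.card {j : Fin (g + 1) // j ≠ 0} = g := by
      simp [Fintype.card_subtype_compl]
    rw [hsub]
    have h1 := hQEcard
    have h2 := hUcard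
    have h3 := hMEeq
    have h4 := hNEeq
    have h5 := hrkQ
    have h6 := hBcard
    have h7 := hrkM
    have h8 := hrkN
    omega
  · -- cycles
    rintro (j | i)
    · rw [hAinl]
      obtain ⟨S, hS, hCj⟩ := hCcyc j.1
      refine ⟨S, fun Ct hCt => hQcirc Ct (hPc1 Ct (hS Ct hCt)) ?_, hCj⟩
      intro hp
      exact hponce j.1 j.2 (hCj ▸ (Set.subset_sUnion_of_mem hCt hp))
    · rw [hAinr]
      by_cases hpDi : p ∈ D i
      · rw [if_pos hpDi]
        obtain ⟨SC, hSC, hC0⟩ := hCcyc 0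
        obtain ⟨SD, hSD, hDi⟩ := hDcyc i
        obtain ⟨Y0, hY0S, hpY0⟩ := (show p ∈ ⋃₀ SC from hC0 ▸ hpC)
        obtain ⟨Zd, hZdS, hpZd⟩ := (show p ∈ ⋃₀ SD from hDi ▸ hpDi)
        refine ⟨{W | ((W ∈ SC ∨ W ∈ SD) ∧ p ∉ W) ∨
            (∃ Y ∈ SC, p ∈ Y ∧ W = (Y ∪ Zd) \ {p}) ∨
            (∃ Z ∈ SD, p ∈ Z ∧ W = (Y0 ∪ Z) \ {p})}, ?_, ?_⟩
        · rintro W (⟨hW | hW, hpW⟩ | ⟨Y, hY, hpY, rfl⟩ | ⟨Z, hZ, hpZ, rfl⟩)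
          · exact hQcirc W (hPc1 W (hSC W hW)) hpW
          · exact hQcirc W (hPc2 W (hSD W hW)) hpW
          · exact hQcirc _ (hPc3 _ _ (hSC Y hY) (hSD Zd hZdS) hpY hpZd)
              (fun h => h.2 rfl)
          · exact hQcirc _ (hPc3 _ _ (hSC Y0 hY0S) (hSD Z hZ) hpY0 hpZ)
              (fun h => h.2 rfl)
        · ext x
          constructor
          · rintro ⟨hx, hxp⟩
            rcases hx with hx | hx
            · obtain ⟨Y, hYS, hxY⟩ := (show x ∈ ⋃₀ SC from hC0 ▸ hx)
              by_cases hpY : p ∈ Y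
              · exact ⟨(Y ∪ Zd) \ {p}, Or.inr (Or.inl ⟨Y, hYS, hpY, rfl⟩),
                  ⟨Or.inl hxY, hxp⟩⟩
              · exact ⟨Y, Or.inl ⟨Or.inl hYS, hpY⟩, hxY⟩
            · obtain ⟨Z, hZS, hxZ⟩ := (show x ∈ ⋃₀ SD from hDi ▸ hx)
              by_cases hpZ : p ∈ Z
              · exact ⟨(Y0 ∪ Z) \ {p}, Or.inr (Or.inr ⟨Z, hZS, hpZ, rfl⟩),
                  ⟨Or.inr hxZ, hxp⟩⟩
              · exact ⟨Z, Or.inl ⟨Or.inr hZS, hpZ⟩, hxZ⟩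
          · rintro ⟨W, hWS, hxW⟩
            rcases hWS with ⟨hW | hW, hpW⟩ | ⟨Y, hY, hpY, rfl⟩ | ⟨Z, hZ, hpZ, rfl⟩
            · exact ⟨Or.inl (hC0 ▸ ⟨W, hW, hxW⟩), fun h => hpW (h ▸ hxW)⟩
            · exact ⟨Or.inr (hDi ▸ ⟨W, hW, hxW⟩), fun h => hpW (h ▸ hxW)⟩
            · obtain ⟨hx, hxp⟩ := hxW
              rcases hx with hx | hx
              · exact ⟨Or.inl (hC0 ▸ ⟨Y, hY, hx⟩), hxp⟩
              · exact ⟨Or.inr (hDi ▸ ⟨Zd, hZdS, hx⟩), hxp⟩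
            · obtain ⟨hx, hxp⟩ := hxW
              rcases hx with hx | hx
              · exact ⟨Or.inl (hC0 ▸ ⟨Y0, hY0S, hx⟩), hxp⟩
              · exact ⟨Or.inr (hDi ▸ ⟨Z, hZ, hx⟩), hxp⟩
      · rw [if_neg hpDi]
        obtain ⟨S, hS, hDi⟩ := hDcyc i
        refine ⟨S, fun Ct hCt => hQcirc Ct (hPc2 Ct (hS Ct hCt)) ?_, hDi⟩
        intro hp
        exact hpDi (hDi ▸ (Set.subset_sUnion_of_mem hCt hp))
  · -- dependence of unique unions
    intro σ hσ
    classical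
    have hUUA_sub : uniqueUnion A σ ⊆ P.E \ {p} := by
      rintro e ⟨i, ⟨hiσ, hie⟩, -⟩
      exact hAsub i hie
    have hUUD_sub : ∀ s : Finset (Fin (f + 1)), uniqueUnion D s ⊆ N.E := by
      rintro s e ⟨i, ⟨-, hie⟩, -⟩
      exact hDN i hie
    have hUUC_sub : ∀ s : Finset (Fin (g + 1)), uniqueUnion C s ⊆ M.E := by
      rintro s e ⟨j, ⟨-, hje⟩, -⟩
      exact hCM j hje
    set σD : Finset (Fin (f + 1)) := Finset.univ.filter (fun i => Sum.inr i ∈ σ) with hσDdef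
    have hσDmem : ∀ i, i ∈ σD ↔ Sum.inr i ∈ σ := by
      intro i; simp [hσDdef]
    set τ0 : Finset (Fin (g + 1)) :=
      Finset.univ.filter (fun j => ∃ h : j ≠ 0, Sum.inl ⟨j, h⟩ ∈ σ) with hτ0def
    have hτ0mem : ∀ j, j ∈ τ0 ↔ ∃ h : j ≠ 0, Sum.inl ⟨j, h⟩ ∈ σ := by
      intro j; simp [hτ0def]
    -- U1
    have hU1 : ∀ e, e ∈ N.E → e ≠ p →
        (e ∈ uniqueUnion A σ ↔ e ∈ uniqueUnion D σD) := by
      intro e heN hep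
      obtain ⟨hinl, hinr⟩ := hmemN e heN hep
      constructor
      · rintro ⟨i, ⟨hiσ, hie⟩, huniq⟩
        obtain (j | i') := i
        · exact absurd hie (hinl j)
        · refine ⟨i', ⟨(hσDmem i').2 hiσ, (hinr i').1 hie⟩, ?_⟩
          rintro i'' ⟨hi''σ, hi''e⟩
          exact Sum.inr.inj
            (huniq (Sum.inr i'') ⟨(hσDmem i'').1 hi''σ, (hinr i'').2 hi''e⟩)
      · rintro ⟨i, ⟨hiσ, hie⟩, huniq⟩
        refine ⟨Sum.inr i, ⟨(hσDmem i).1 hiσ, (hinr i).2 hie⟩, ?_⟩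
        rintro i'' ⟨hi''σ, hi''e⟩
        obtain (j | i2) := i''
        · exact absurd hi''e (hinl j)
        · exact congrArg Sum.inr (huniq i2 ⟨(hσDmem i2).2 hi''σ, (hinr i2).1 hi''e⟩)
    by_cases hσDne : σD.Nonempty
    · by_cases hex1 : ∃! i, i ∈ σD ∧ p ∈ D i
      · -- case C
        obtain ⟨i0, ⟨hi0σ, hpi0⟩, hi0uniq⟩ := hex1
        set τ : Finset (Fin (g + 1)) := insert 0 τ0 with hτdef
        have hτmem : ∀ j, j ∈ τ ↔ j = 0 ∨ j ∈ τ0 := by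
          intro j; simp [hτdef]
        have hU2 : ∀ e, e ∈ M.E → e ≠ p →
            (e ∈ uniqueUnion A σ ↔ e ∈ uniqueUnion C τ) := by
          intro e heM hep
          have hinr := hmemM e heM hep
          constructor
          · rintro ⟨i, ⟨hiσ, hie⟩, huniq⟩
            obtain (j | i') := i
            · refine ⟨j.1, ⟨(hτmem j.1).2 (Or.inr ((hτ0mem j.1).2 ⟨j.2, hiσ⟩)), hie⟩, ?_⟩
              rintro j' ⟨hj'τ, hj'e⟩
              rcases (hτmem j').1 hj'τ with rfl | hj'0
              · have h := huniq (Sum.inr i0)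
                  ⟨(hσDmem i0).1 hi0σ, (hinr i0).2 ⟨hpi0, hj'e⟩⟩
                exact absurd h (by simp)
              · obtain ⟨h0, hin⟩ := (hτ0mem j').1 hj'0
                have h := huniq (Sum.inl ⟨j', h0⟩) ⟨hin, hj'e⟩
                exact congrArg Subtype.val (Sum.inl.inj h)
            · obtain ⟨hpDi', heC0⟩ := (hinr i').1 hie
              refine ⟨0, ⟨(hτmem 0).2 (Or.inl rfl), heC0⟩, ?_⟩
              rintro j' ⟨hj'τ, hj'e⟩
              rcases (hτmem j').1 hj'τ with rfl | hj'0
              · rfl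
              · obtain ⟨h0, hin⟩ := (hτ0mem j').1 hj'0
                have h := huniq (Sum.inl ⟨j', h0⟩) ⟨hin, hj'e⟩
                exact absurd h (by simp)
          · rintro ⟨j, ⟨hjτ, hje⟩, huniq⟩
            rcases (hτmem j).1 hjτ with rfl | hj0
            · refine ⟨Sum.inr i0, ⟨(hσDmem i0).1 hi0σ, (hinr i0).2 ⟨hpi0, hje⟩⟩, ?_⟩
              rintro i'' ⟨hi''σ, hi''e⟩
              obtain (j' | i2) := i''
              · have h1 : j'.1 ∈ τ0 := (hτ0mem j'.1).2 ⟨j'.2, hi''σ⟩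
                have h := huniq j'.1 ⟨(hτmem j'.1).2 (Or.inr h1), hi''e⟩
                exact absurd h j'.2
              · obtain ⟨hpDi2, -⟩ := (hinr i2).1 hi''e
                exact congrArg Sum.inr (hi0uniq i2 ⟨(hσDmem i2).2 hi''σ, hpDi2⟩)
            · obtain ⟨h0, hin⟩ := (hτ0mem j).1 hj0
              refine ⟨Sum.inl ⟨j, h0⟩, ⟨hin, hje⟩, ?_⟩
              rintro i'' ⟨hi''σ, hi''e⟩
              obtain (j' | i2) := i''
              · have h1 : j'.1 ∈ τ0 := (hτ0mem j'.1).2 ⟨j'.2, hi''σ⟩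
                have h2 := huniq j'.1 ⟨(hτmem j'.1).2 (Or.inr h1), hi''e⟩
                exact congrArg Sum.inl (Subtype.ext h2)
              · obtain ⟨hpDi2, heC0⟩ := (hinr i2).1 hi''e
                have h := huniq 0 ⟨(hτmem 0).2 (Or.inl rfl), heC0⟩
                exact absurd h (Ne.symm h0)
        have hdepD : N.Dep (uniqueUnion D σD) := hDdep σD hσDne
        obtain ⟨Z, hZ, hZsub⟩ :=
          Matroid.exists_circuit_subset' (hNE.subset (hUUD_sub σD)) hdepD
        have hτne : τ.Nonempty := ⟨0, (hτmem 0).2 (Or.inl rfl)⟩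
        have hWex : ∃ W, P.Circuit W ∧ W ⊆ uniqueUnion A σ := by
          by_cases hpZ : p ∈ Z
          · have hdepC : M.Dep (uniqueUnion C τ) := hCdep τ hτne
            obtain ⟨Y, hY, hYsub⟩ :=
              Matroid.exists_circuit_subset' (hME.subset (hUUC_sub τ)) hdepC
            by_cases hpY : p ∈ Y
            · refine ⟨(Y ∪ Z) \ {p}, hPc3 Y Z hY hZ hpY hpZ, ?_⟩
              rintro x ⟨hx, hxp⟩
              rcases hx with hx | hx
              · exact (hU2 x (hY.subset_ground' hx) hxp).2 (hYsub hx)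
              · exact (hU1 x (hZ.subset_ground' hx) hxp).2 (hZsub hx)
            · exact ⟨Y, hPc1 Y hY, fun x hx =>
                (hU2 x (hY.subset_ground' hx) (fun h => hpY (h ▸ hx))).2 (hYsub hx)⟩
          · exact ⟨Z, hPc2 Z hZ, fun x hx =>
              (hU1 x (hZ.subset_ground' hx) (fun h => hpZ (h ▸ hx))).2 (hZsub hx)⟩
        exact hQdep _ (hUUA_sub.trans diff_subset)
          (fun h => (hUUA_sub h).2 rfl) hWex
      · -- case B
        have hdepD : N.Dep (uniqueUnion D σD) := hDdep σD hσDne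
        obtain ⟨Z, hZ, hZsub⟩ :=
          Matroid.exists_circuit_subset' (hNE.subset (hUUD_sub σD)) hdepD
        have hpUU : p ∉ uniqueUnion D σD := hex1
        have hpZ : p ∉ Z := fun h => hpUU (hZsub h)
        refine hQdep _ (hUUA_sub.trans diff_subset) (fun h => (hUUA_sub h).2 rfl)
          ⟨Z, hPc2 Z hZ, fun x hx =>
            (hU1 x (hZ.subset_ground' hx) (fun h => hpZ (h ▸ hx))).2 (hZsub hx)⟩
    · -- case A
      have hnoinr : ∀ i, Sum.inr i ∉ σ := fun i hi => hσDne ⟨i, (hσDmem i).2 hi⟩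
      have hUA : uniqueUnion A σ = uniqueUnion C τ0 := by
        ext e
        constructor
        · rintro ⟨i, ⟨hiσ, hie⟩, huniq⟩
          obtain (j | i') := i
          · refine ⟨j.1, ⟨(hτ0mem j.1).2 ⟨j.2, hiσ⟩, hie⟩, ?_⟩
            rintro j' ⟨hj'τ, hj'e⟩
            obtain ⟨h0, hin⟩ := (hτ0mem j').1 hj'τ
            exact congrArg Subtype.val (Sum.inl.inj (huniq (Sum.inl ⟨j', h0⟩) ⟨hin, hj'e⟩))
          · exact absurd hiσ (hnoinr i')
        · rintro ⟨j, ⟨hjτ, hje⟩, huniq⟩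
          obtain ⟨h0, hin⟩ := (hτ0mem j).1 hjτ
          refine ⟨Sum.inl ⟨j, h0⟩, ⟨hin, hje⟩, ?_⟩
          rintro i'' ⟨hi''σ, hi''e⟩
          obtain (j' | i2) := i''
          · exact congrArg Sum.inl (Subtype.ext
              (huniq j'.1 ⟨(hτ0mem j'.1).2 ⟨j'.2, hi''σ⟩, hi''e⟩))
          · exact absurd hi''σ (hnoinr i2)
      have hτ0ne : τ0.Nonempty := by
        obtain ⟨i, hi⟩ := hσ
        obtain (j | i') := i
        · exact ⟨j.1, (hτ0mem j.1).2 ⟨j.2, hi⟩⟩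
        · exact absurd hi (hnoinr i')
      have hdepC : M.Dep (uniqueUnion C τ0) := hCdep τ0 hτ0ne
      obtain ⟨Y, hY, hYsub⟩ :=
        Matroid.exists_circuit_subset' (hME.subset (hUUC_sub τ0)) hdepC
      have hpUU : p ∉ uniqueUnion C τ0 := by
        rintro ⟨j, ⟨hjτ, hpj⟩, -⟩
        obtain ⟨h0, -⟩ := (hτ0mem j).1 hjτ
        exact hponce j h0 hpj
      rw [hUA]
      exact hQdep _ ((hUUC_sub τ0).trans (hPE ▸ subset_union_left)) hpUU
        ⟨Y, hPc1 Y hY, hYsub⟩
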